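/- Let m be a positive integer and let σ be a derangement of [m]. For each j ∈ [m] define (a_j, b_j) = (2j-1, 2j) if σ(j) < j and (a_j, b_j) = (2j, 2j-1) if σ(j) > j, and define π on [2m] by π(a_j) = a_j and π(b_j) = b_{σ(j)}. Then π is an alternating permutation of [2m] with exactly m fixed points. -/
import Mathlib


/-- `π` is an alternating permutation: `π 1 > π 2 < π 3 > π 4 < ⋯`
(here stated with 0-indexed positions). -/
def IsAlternating {n : ℕ} (π : Equiv.Perm (Fin n)) : Prop :=
  ∀ i : ℕ, ∀ h : i + 1 < n,
    if i % 2 = 0 then π ⟨i + 1, h⟩ < π ⟨i, Nat.lt_of_succ_lt h⟩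
    else π ⟨i, Nat.lt_of_succ_lt h⟩ < π ⟨i + 1, h⟩

/-- `π` is a reverse alternating permutation: `π 1 < π 2 > π 3 < π 4 > ⋯`
(here stated with 0-indexed positions). -/
def IsRevAlternating {n : ℕ} (π : Equiv.Perm (Fin n)) : Prop :=
  ∀ i : ℕ, ∀ h : i + 1 < n,
    if i % 2 = 0 then π ⟨i, Nat.lt_of_succ_lt h⟩ < π ⟨i + 1, h⟩
    else π ⟨i + 1, h⟩ < π ⟨i, Nat.lt_of_succ_lt h⟩

/-- The number of fixed points of a permutation of `Fin n`. -/
def fixedPointCount {n : ℕ} (π : Equiv.Perm (Fin n)) : ℕ :=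
  (Finset.univ.filter fun i => π i = i).card

/-- For `j ∈ [m]` (0-indexed `j : Fin m`), the 0-indexed position of `2j-1 ∈ [2m]`
(1-indexed), i.e. the smaller element of the pair `I_j = {2j-1, 2j}`. -/
def pairLow {m : ℕ} (j : Fin m) : Fin (2 * m) :=
  ⟨2 * j.val, by have := j.isLt; omega⟩

/-- For `j ∈ [m]` (0-indexed `j : Fin m`), the 0-indexed position of `2j ∈ [2m]`
(1-indexed), i.e. the larger element of the pair `I_j = {2j-1, 2j}`. -/
def pairHigh {m : ℕ} (j : Fin m) : Fin (2 * m) :=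
  ⟨2 * j.val + 1, by have := j.isLt; omega⟩

/-- `b_j`: the element of the pair `I_j = {2j-1, 2j}` that is not fixed by `π`
(assuming exactly one of them is fixed, this is the moved one). -/
def movedPoint {m : ℕ} (π : Equiv.Perm (Fin (2 * m))) (j : Fin m) : Fin (2 * m) :=
  if π (pairLow j) = pairLow j then pairHigh j else pairLow j

/-- `a_j`: the fixed element of the pair `I_j` prescribed by the derangement `σ`:
`(a_j, b_j) = (2j-1, 2j)` if `σ(j) < j` and `(a_j, b_j) = (2j, 2j-1)` if `σ(j) > j`. -/
def aOf {m : ℕ} (σ : Equiv.Perm (Fin m)) (j : Fin m) : Fin (2 * m) :=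
  if σ j < j then pairLow j else pairHigh j

/-- `b_j`: the moved element of the pair `I_j` prescribed by the derangement `σ`. -/
def bOf {m : ℕ} (σ : Equiv.Perm (Fin m)) (j : Fin m) : Fin (2 * m) :=
  if σ j < j then pairHigh j else pairLow j

/-- Given a derangement `σ` of `[m]`, the permutation `π` of `[2m]` defined by
`π(a_j) = a_j` and `π(b_j) = b_{σ(j)}` is alternating with exactly `m` fixed points. -/
theorem derangement_gives_alternating (m : ℕ) (hm : 1 ≤ m)
    (σ : Equiv.Perm (Fin m)) (hσ : ∀ x, σ x ≠ x)
    (π : Equiv.Perm (Fin (2 * m)))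
    (hπ : ∀ j : Fin m, π (aOf σ j) = aOf σ j ∧ π (bOf σ j) = bOf σ (σ j)) :
    IsAlternating π ∧ fixedPointCount π = m := by
  have hb : ∀ k : Fin m, 2 * k.val ≤ (bOf σ k).val ∧ (bOf σ k).val ≤ 2 * k.val + 1 := by
    intro k; unfold bOf pairLow pairHigh; split <;> simp
  have pl : ∀ j : Fin m, (pairLow j).val = 2 * j.val := fun _ => rfl
  have ph : ∀ j : Fin m, (pairHigh j).val = 2 * j.val + 1 := fun _ => rfl
  have hgt : ∀ j : Fin m, ¬ σ j < j → (j : ℕ) < σ j := by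
    intro j h
    have := hσ j
    have : (σ j).val ≠ j.val := fun e => this (Fin.ext e)
    have h' : ¬ (σ j).val < j.val := h
    omega
  have hlow : ∀ j : Fin m, 2 * j.val ≤ (π (pairLow j)).val := by
    intro j
    by_cases h : σ j < j
    · have ha : aOf σ j = pairLow j := by unfold aOf; simp [h]
      rw [← ha, (hπ j).1, ha, pl]
    · have hb' : bOf σ j = pairLow j := by unfold bOf; simp [h]
      rw [← hb', (hπ j).2]
      have h1 := (hb (σ j)).1
      have h2 := hgt j h
      omega
  have hhigh : ∀ j : Fin m, (π (pairHigh j)).val ≤ 2 * j.val + 1 := by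
    intro j
    by_cases h : σ j < j
    · have hb' : bOf σ j = pairHigh j := by unfold bOf; simp [h]
      rw [← hb', (hπ j).2]
      have h1 := (hb (σ j)).2
      have h2 : (σ j).val < j.val := h
      omega
    · have ha : aOf σ j = pairHigh j := by unfold aOf; simp [h]
      rw [← ha, (hπ j).1, ha, ph]
  have heven : ∀ j : Fin m, (π (pairHigh j)).val < (π (pairLow j)).val := by
    intro j
    by_cases h : σ j < j
    · have ha : aOf σ j = pairLow j := by unfold aOf; simp [h]
      have hb' : bOf σ j = pairHigh j := by unfold bOf; simp [h]
      have e1 : π (pairLow j) = pairLow j := by rw [← ha, (hπ j).1, ha]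
      have e2 : π (pairHigh j) = bOf σ (σ j) := by rw [← hb', (hπ j).2]
      rw [e1, e2]
      have h1 := (hb (σ j)).2
      have h2 : (σ j).val < j.val := h
      show (bOf σ (σ j)).val < (pairLow j).val
      rw [pl]; omega
    · have ha : aOf σ j = pairHigh j := by unfold aOf; simp [h]
      have hb' : bOf σ j = pairLow j := by unfold bOf; simp [h]
      have e1 : π (pairHigh j) = pairHigh j := by rw [← ha, (hπ j).1, ha]
      have e2 : π (pairLow j) = bOf σ (σ j) := by rw [← hb', (hπ j).2]
      rw [e1, e2]
      have h1 := (hb (σ j)).1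
      have h2 := hgt j h
      show (pairHigh j).val < (bOf σ (σ j)).val
      rw [ph]; omega
  constructor
  · intro i h
    by_cases hi : i % 2 = 0
    · simp only [hi, if_true]
      have hj : i / 2 < m := by omega
      set j : Fin m := ⟨i / 2, hj⟩ with hjdef
      have e1 : (⟨i, Nat.lt_of_succ_lt h⟩ : Fin (2 * m)) = pairLow j := by
        apply Fin.ext; show i = 2 * (i / 2); omega
      have e2 : (⟨i + 1, h⟩ : Fin (2 * m)) = pairHigh j := by
        apply Fin.ext; show i + 1 = 2 * (i / 2) + 1; omega
      rw [e1, e2]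
      exact heven j
    · simp only [hi, if_false]
      have hj : i / 2 < m := by omega
      have hj1 : i / 2 + 1 < m := by omega
      set j : Fin m := ⟨i / 2, hj⟩ with hjdef
      set j1 : Fin m := ⟨i / 2 + 1, hj1⟩ with hj1def
      have e1 : (⟨i, Nat.lt_of_succ_lt h⟩ : Fin (2 * m)) = pairHigh j := by
        apply Fin.ext; show i = 2 * (i / 2) + 1; omega
      have e2 : (⟨i + 1, h⟩ : Fin (2 * m)) = pairLow j1 := by
        apply Fin.ext; show i + 1 = 2 * (i / 2 + 1); omega
      rw [e1, e2]
      have h1 := hhigh j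
      have h2 := hlow j1
      show (π (pairHigh j)).val < (π (pairLow j1)).val
      simp only [hjdef, hj1def] at h1 h2 ⊢
      omega
  · have ha : ∀ k : Fin m, 2 * k.val ≤ (aOf σ k).val ∧ (aOf σ k).val ≤ 2 * k.val + 1 := by
      intro k; unfold aOf pairLow pairHigh; split <;> simp
    have key : (Finset.univ.filter fun i => π i = i) = Finset.univ.image (aOf σ) := by
      ext i
      simp only [Finset.mem_filter, Finset.mem_univ, true_and, Finset.mem_image]
      constructor
      · intro hfix
        have hj : i.val / 2 < m := by have := i.isLt; omega
        set j : Fin m := ⟨i.val / 2, hj⟩ with hjdef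
        refine ⟨j, ?_⟩
        have hval : i.val = 2 * (i.val / 2) ∨ i.val = 2 * (i.val / 2) + 1 := by omega
        have hcover : i = pairLow j ∨ i = pairHigh j := by
          rcases hval with h | h
          · left; apply Fin.ext; exact h
          · right; apply Fin.ext; exact h
        have hab : i = aOf σ j ∨ i = bOf σ j := by
          unfold aOf bOf; split <;> tauto
        rcases hab with h | h
        · exact h.symm
        · exfalso
          rw [h, (hπ j).2] at hfix
          have hv := congrArg Fin.val hfix
          have h1 := hb (σ j)
          have h2 := hb j
          have hne : (σ j).val ≠ j.val := fun e => hσ j (Fin.ext e)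
          omega
      · rintro ⟨j, rfl⟩
        exact (hπ j).1
    rw [fixedPointCount, key, Finset.card_image_of_injective]
    · simp
    · intro j k hjk
      have h1 := ha j
      have h2 := ha k
      rw [hjk] at h1
      apply Fin.ext
      omega
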